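/- Let k ≥ 2, i ≥ 3 and n ≥ 1 be integers. Let H* be a k-partite 3-uniform hypergraph with pairwise disjoint parts V₁,…,V_k and hyperedge set E*, and let d₁,…,d_{i−3} and p₁,…,p_n be distinct fresh vertices. Define the hypergraph H with vertex set V₁ ∪ ⋯ ∪ V_k ∪ {d₁,…,d_{i−3}} ∪ {p₁,…,p_n} and hyperedge set { {p_s, v} : 1 ≤ s ≤ n, v a vertex of H, v ≠ p_s } ∪ ⋃_{j=1}^{k} { all 2-element subsets of V_j } ∪ { {d₁,…,d_{i−3}} ∪ e : e ∈ E* }. Then H contains an independent set of cardinality k + i − 3 if and only if there exist x₁ ∈ V₁, …, x_k ∈ V_k such that {x₁,…,x_k} contains no hyperedge of H*. -/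

import Mathlib

/-!
An independent set with at least two vertices contains no padding vertex `p_s`, because `{p_s, v}`
is an edge for every other vertex `v`, and it meets each part `V_j` at most once, because each part
is a clique. Counting then forces an independent set of size `k + (i - 3)` to consist of all the
dummies `d₁, …, d_{i-3}` together with one vertex `x_j` of each part; the only edges left are the
sets `{d₁, …, d_{i-3}} ∪ e`, so such a set is independent exactly when `{x₁, …, x_k}` contains no
edge of `H*`.
-/

open Finset Function

section SparseEmbedding

variable {α ι : Type*} {V : ι → Finset α}

theorem injective_of_forall_mem (hV : Pairwise (Disjoint on V)) {x : ι → α} (hx : ∀ j, x j ∈ V j) :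
    Injective x := fun j₁ j₂ h => by
  by_contra hne
  exact disjoint_left.mp (hV hne) (hx j₁) (h ▸ hx j₂)

variable [DecidableEq α] [Fintype ι] {D P X : Finset α} {E : Finset (Finset α)}

/-- The hyperedges of `H`, with the dummies `D = {d₁, …, d_{i-3}}` and the padding vertices
`P = {p₁, …, p_n}`. -/
def embeddingEdges (V : ι → Finset α) (D P : Finset α) (E : Finset (Finset α)) :
    Finset (Finset α) :=
  ((P ×ˢ (univ.biUnion V ∪ D ∪ P)).filter fun q => q.2 ≠ q.1).image (fun q => {q.1, q.2}) ∪
    (univ.biUnion fun j => ((V j ×ˢ V j).filter fun q => q.1 ≠ q.2).image fun q => {q.1, q.2}) ∪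
    E.image fun e => D ∪ e

theorem forall_not_subset_embeddingEdges_iff (hX : X ⊆ univ.biUnion V ∪ D ∪ P) :
    (∀ e ∈ embeddingEdges V D P E, ¬ e ⊆ X) ↔
      (∀ s ∈ X ∩ P, ∀ v ∈ X, v = s) ∧ (∀ j, #(X ∩ V j) ≤ 1) ∧ ∀ e ∈ E, ¬ D ∪ e ⊆ X := by
  simp only [embeddingEdges, forall_mem_union, mem_filter, mem_product, mem_biUnion, mem_univ,
    true_and, insert_subset_iff, singleton_subset_iff, card_le_one, mem_inter, mem_image,
    forall_exists_index, and_imp, Prod.exists, forall_comm (α := Finset α), forall_eq']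
  constructor
  · rintro ⟨⟨hstar, hpart⟩, hE⟩
    refine ⟨fun s hs hsP v hv => ?_, fun j a ha haV b hb hbV => ?_, hE⟩
    · by_contra hne
      exact hstar s v hsP (hX hv) hne ⟨hs, hv⟩
    · by_contra hne
      exact hpart j a b haV hbV hne ⟨ha, hb⟩
  · rintro ⟨hstar, hpart, hE⟩
    refine ⟨⟨fun s v hsP _ hne hsv => hne (hstar s hsv.1 hsP v hsv.2), ?_⟩, hE⟩
    exact fun j a b haV hbV hne hab => hne (hpart j a hab.1 haV b hab.2 hbV)

theorem card_inter_biUnion_eq_sum (hV : Pairwise (Disjoint on V)) (X : Finset α) :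
    #(X ∩ univ.biUnion V) = ∑ j, #(X ∩ V j) := by
  rw [inter_biUnion, card_biUnion]
  exact (hV.pairwiseDisjoint _).mono fun j => inter_subset_right

theorem disjoint_of_forall_mem_inter_eq (hX : 1 < #X) (h : ∀ s ∈ X ∩ P, ∀ v ∈ X, v = s) :
    Disjoint X P := by
  refine disjoint_left.mpr fun s hs hsP => ?_
  obtain ⟨v, hv, hvs⟩ := exists_mem_ne hX s
  exact hvs (h s (mem_inter.mpr ⟨hs, hsP⟩) v hv)

theorem eq_of_mem_image_of_mem (hV : Pairwise (Disjoint on V)) {x : ι → α} (hx : ∀ j, x j ∈ V j)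
    {a : α} {j : ι} (ha : a ∈ univ.image x) (haV : a ∈ V j) : a = x j := by
  obtain ⟨j', -, rfl⟩ := mem_image.mp ha
  by_contra hne
  exact disjoint_left.mp (hV fun h => hne (congrArg x h)) (hx j') haV

theorem exists_forall_mem_inter_of_card (hV : Pairwise (Disjoint on V))
    (hpart : ∀ j, #(X ∩ V j) ≤ 1) (hX : #(X ∩ univ.biUnion V) = Fintype.card ι) :
    ∃ x : ι → α, ∀ j, x j ∈ X ∩ V j := by
  have hone : ∀ j, #(X ∩ V j) = 1 := by
    have hsum : ∑ j, #(X ∩ V j) = ∑ _j : ι, 1 := by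
      rw [← card_inter_biUnion_eq_sum hV, hX, sum_const, card_univ, smul_eq_mul, mul_one]
    simpa using (sum_eq_sum_iff_of_le fun j _ => hpart j).mp hsum
  choose x hx using fun j => card_pos.mp (hone j ▸ Nat.one_pos)
  exact ⟨x, hx⟩

theorem exists_transversal_of_forall_not_subset (hV : Pairwise (Disjoint on V))
    (hcard : 1 < Fintype.card ι + #D) (hXU : X ⊆ univ.biUnion V ∪ D ∪ P)
    (hX : #X = Fintype.card ι + #D) (hind : ∀ e ∈ embeddingEdges V D P E, ¬ e ⊆ X) :
    ∃ x : ι → α, (∀ j, x j ∈ V j) ∧ ∀ e ∈ E, ¬ e ⊆ univ.image x := by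
  obtain ⟨hstar, hpart, hE⟩ := (forall_not_subset_embeddingEdges_iff hXU).mp hind
  have hXVD : X ⊆ univ.biUnion V ∪ D :=
    Disjoint.left_le_of_le_sup_right hXU (disjoint_of_forall_mem_inter_eq (hX ▸ hcard) hstar)
  have hsplit : #X ≤ #(X ∩ univ.biUnion V) + #(X ∩ D) :=
    calc #X = #(X ∩ univ.biUnion V ∪ X ∩ D) := by
          rw [← inter_union_distrib_left, inter_eq_left.mpr hXVD]
      _ ≤ _ := card_union_le _ _
  have hV_le : #(X ∩ univ.biUnion V) ≤ Fintype.card ι := by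
    rw [card_inter_biUnion_eq_sum hV]
    simpa using sum_le_card_nsmul univ _ 1 fun j _ => hpart j
  have hD_le : #(X ∩ D) ≤ #D := card_le_card inter_subset_right
  have hDX : D ⊆ X :=
    inter_eq_right.mp (eq_of_subset_of_card_le inter_subset_right (by omega))
  obtain ⟨x, hx⟩ := exists_forall_mem_inter_of_card hV hpart (by omega)
  refine ⟨x, fun j => (mem_inter.mp (hx j)).2, fun e he hex => hE e he (union_subset hDX ?_)⟩
  exact hex.trans fun a ha => by
    obtain ⟨j, -, rfl⟩ := mem_image.mp ha
    exact (mem_inter.mp (hx j)).1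

theorem card_image_union (hV : Pairwise (Disjoint on V)) (hDV : ∀ j, Disjoint D (V j))
    {x : ι → α} (hx : ∀ j, x j ∈ V j) : #(univ.image x ∪ D) = Fintype.card ι + #D := by
  have hxD : Disjoint (univ.image x) D := disjoint_left.mpr fun a ha haD => by
    obtain ⟨j, -, rfl⟩ := mem_image.mp ha
    exact disjoint_left.mp (hDV j) haD (hx j)
  rw [card_union_of_disjoint hxD, card_image_of_injective _ (injective_of_forall_mem hV hx),
    card_univ]

theorem image_union_subset {x : ι → α} (hx : ∀ j, x j ∈ V j) :
    univ.image x ∪ D ⊆ univ.biUnion V ∪ D ∪ P :=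
  (union_subset_union (image_subset_iff.mpr fun j _ => mem_biUnion.mpr ⟨j, mem_univ j, hx j⟩)
    subset_rfl).trans subset_union_left

theorem image_union_inter_subset_singleton (hV : Pairwise (Disjoint on V))
    (hDV : ∀ j, Disjoint D (V j)) {x : ι → α} (hx : ∀ j, x j ∈ V j) (j : ι) :
    (univ.image x ∪ D) ∩ V j ⊆ {x j} := fun a ha => by
  obtain ⟨haX, haV⟩ := mem_inter.mp ha
  rcases mem_union.mp haX with hax | haD
  · exact mem_singleton.mpr (eq_of_mem_image_of_mem hV hx hax haV)
  · exact absurd haV (disjoint_left.mp (hDV j) haD)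

theorem forall_not_subset_image_union (hV : Pairwise (Disjoint on V))
    (hE : ∀ e ∈ E, e ⊆ univ.biUnion V) (hDV : ∀ j, Disjoint D (V j))
    (hPV : ∀ j, Disjoint P (V j)) (hDP : Disjoint D P) {x : ι → α} (hx : ∀ j, x j ∈ V j)
    (hxE : ∀ e ∈ E, ¬ e ⊆ univ.image x) :
    ∀ e ∈ embeddingEdges V D P E, ¬ e ⊆ univ.image x ∪ D := by
  have hsing := image_union_inter_subset_singleton hV hDV hx
  rw [forall_not_subset_embeddingEdges_iff (image_union_subset hx)]
  refine ⟨fun s hs => ?_, fun j => (card_le_card (hsing j)).trans_eq (card_singleton _),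
    fun e he hDe => ?_⟩
  · obtain ⟨hsX, hsP⟩ := mem_inter.mp hs
    rcases mem_union.mp hsX with hsx | hsD
    · obtain ⟨j, -, rfl⟩ := mem_image.mp hsx
      exact absurd (hx j) (disjoint_left.mp (hPV j) hsP)
    · exact absurd hsP (disjoint_left.mp hDP hsD)
  · refine hxE e he fun a ha => ?_
    obtain ⟨j, -, haV⟩ := mem_biUnion.mp (hE e he ha)
    have hax := hsing j (mem_inter.mpr ⟨hDe (mem_union_right D ha), haV⟩)
    exact mem_singleton.mp hax ▸ mem_image_of_mem x (mem_univ j)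

theorem exists_forall_not_subset_iff_exists_transversal (hV : Pairwise (Disjoint on V))
    (hE : ∀ e ∈ E, e ⊆ univ.biUnion V) (hDV : ∀ j, Disjoint D (V j))
    (hPV : ∀ j, Disjoint P (V j)) (hDP : Disjoint D P) (hcard : 1 < Fintype.card ι + #D) :
    (∃ X, X ⊆ univ.biUnion V ∪ D ∪ P ∧ #X = Fintype.card ι + #D ∧
        ∀ e ∈ embeddingEdges V D P E, ¬ e ⊆ X) ↔
      ∃ x : ι → α, (∀ j, x j ∈ V j) ∧ ∀ e ∈ E, ¬ e ⊆ univ.image x := by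
  constructor
  · rintro ⟨X, hXU, hX, hind⟩
    exact exists_transversal_of_forall_not_subset hV hcard hXU hX hind
  · rintro ⟨x, hx, hxE⟩
    exact ⟨univ.image x ∪ D, image_union_subset hx, card_image_union hV hDV hx,
      forall_not_subset_image_union hV hE hDV hPV hDP hx hxE⟩

end SparseEmbedding

theorem sparse_embedding_mixed_arity_general (α : Type) [DecidableEq α] (k i n : ℕ)
    (hk : 2 ≤ k) (hi : 3 ≤ i)
    (Vp : Fin k → Finset α)
    (hVp : ∀ j₁ j₂ : Fin k, j₁ ≠ j₂ → Disjoint (Vp j₁) (Vp j₂))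
    (Estar : Finset (Finset α))
    (hEstar : ∀ e ∈ Estar, e.card = 3 ∧ e ⊆ Finset.univ.biUnion Vp ∧
      ∀ j : Fin k, (e ∩ Vp j).card ≤ 1)
    (d : Fin (i - 3) → α) (hd : Function.Injective d)
    (p : Fin n → α)
    (hdfresh : ∀ j : Fin k, Disjoint (Finset.image d Finset.univ) (Vp j))
    (hpfresh : ∀ j : Fin k, Disjoint (Finset.image p Finset.univ) (Vp j))
    (hdp : Disjoint (Finset.image d Finset.univ) (Finset.image p Finset.univ)) :
    (∃ X : Finset α,
        X ⊆ Finset.univ.biUnion Vp ∪ Finset.image d Finset.univ ∪ Finset.image p Finset.univ ∧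
        X.card = k + i - 3 ∧
        ∀ e ∈ ((Finset.image p Finset.univ ×ˢ
              (Finset.univ.biUnion Vp ∪ Finset.image d Finset.univ ∪
                Finset.image p Finset.univ)).filter fun q => q.2 ≠ q.1).image
              (fun q => ({q.1, q.2} : Finset α)) ∪
            (Finset.univ.biUnion fun j : Fin k =>
              ((Vp j ×ˢ Vp j).filter fun q => q.1 ≠ q.2).image
                fun q => ({q.1, q.2} : Finset α)) ∪
            (Estar.image fun e => Finset.image d Finset.univ ∪ e),
          ¬ e ⊆ X) ↔
      ∃ x : Fin k → α, (∀ j : Fin k, x j ∈ Vp j) ∧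
        ∀ e ∈ Estar, ¬ e ⊆ Finset.image x Finset.univ := by
  have hD : #(univ.image d) = i - 3 := by
    rw [card_image_of_injective _ hd, card_univ, Fintype.card_fin]
  have key := exists_forall_not_subset_iff_exists_transversal (E := Estar) (fun _ _ h => hVp _ _ h)
    (fun e he => (hEstar e he).2.1) hdfresh hpfresh hdp (by rw [Fintype.card_fin, hD]; omega)
  rwa [Fintype.card_fin, hD, ← Nat.add_sub_assoc hi] at key

/-- **Sparse embedding for the 3-uniform hyperclique lower bound.** Let `k ≥ 2`, `i ≥ 3`,
`n ≥ 1`. Given a `k`-partite 3-uniform hypergraph `H*` with pairwise disjoint parts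
`V₁, …, V_k` and hyperedge set `E*`, fresh distinct dummy vertices `d₁, …, d_{i-3}` and padding
vertices `p₁, …, p_n`, form the hypergraph `H` with vertex set
`V₁ ∪ ⋯ ∪ V_k ∪ {d₁,…,d_{i-3}} ∪ {p₁,…,p_n}` and hyperedges: `{p_s, v}` for every vertex `v`
of `H` with `v ≠ p_s`, all 2-element subsets within each part, and the sets
`{d₁,…,d_{i-3}} ∪ e` for `e ∈ E*`. Then `H` has an independent set of cardinality `k + i - 3`
iff there are `x₁ ∈ V₁, …, x_k ∈ V_k` with `{x₁,…,x_k}` containing no hyperedge of `H*`. -/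
theorem sparse_embedding_mixed_arity (α : Type) [DecidableEq α] (k i n : ℕ)
    (hk : 2 ≤ k) (hi : 3 ≤ i) (hn : 1 ≤ n)
    (Vp : Fin k → Finset α)
    (hVp : ∀ j₁ j₂ : Fin k, j₁ ≠ j₂ → Disjoint (Vp j₁) (Vp j₂))
    (Estar : Finset (Finset α))
    (hEstar : ∀ e ∈ Estar, e.card = 3 ∧ e ⊆ Finset.univ.biUnion Vp ∧
      ∀ j : Fin k, (e ∩ Vp j).card ≤ 1)
    (d : Fin (i - 3) → α) (hd : Function.Injective d)
    (p : Fin n → α) (hp : Function.Injective p)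
    (hdfresh : ∀ j : Fin k, Disjoint (Finset.image d Finset.univ) (Vp j))
    (hpfresh : ∀ j : Fin k, Disjoint (Finset.image p Finset.univ) (Vp j))
    (hdp : Disjoint (Finset.image d Finset.univ) (Finset.image p Finset.univ)) :
    (∃ X : Finset α,
        X ⊆ Finset.univ.biUnion Vp ∪ Finset.image d Finset.univ ∪ Finset.image p Finset.univ ∧
        X.card = k + i - 3 ∧
        ∀ e ∈ ((Finset.image p Finset.univ ×ˢ
              (Finset.univ.biUnion Vp ∪ Finset.image d Finset.univ ∪
                Finset.image p Finset.univ)).filter fun q => q.2 ≠ q.1).image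
              (fun q => ({q.1, q.2} : Finset α)) ∪
            (Finset.univ.biUnion fun j : Fin k =>
              ((Vp j ×ˢ Vp j).filter fun q => q.1 ≠ q.2).image
                fun q => ({q.1, q.2} : Finset α)) ∪
            (Estar.image fun e => Finset.image d Finset.univ ∪ e),
          ¬ e ⊆ X) ↔
      ∃ x : Fin k → α, (∀ j : Fin k, x j ∈ Vp j) ∧
        ∀ e ∈ Estar, ¬ e ⊆ Finset.image x Finset.univ :=
  sparse_embedding_mixed_arity_general α k i n hk hi Vp hVp Estar hEstar d hd p hdfresh hpfresh hdp
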